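/- Let C > 0, θ ∈ [0,1], and p ∈ (0,1). Then the conditional risk R : ℝ → ℝ is continuous and convex, R(f) → +∞ as f → +∞ and as f → −∞, and R attains its global minimum at some point f* ∈ ℝ. -/

import Mathlib

/-!
The DWD loss is the line `2√C - C u` glued at `u = 1/√C` to `1/u` with matching value and
slope, so it is differentiable with monotone derivative, hence convex; the FLAME loss is a
maximum of convex functions. Coercivity comes from the linear branch: `L(u, θ) → ∞` as
`u → -∞`, so `p L(f, θ) → ∞` as `f → -∞` and `(1 - p) L(-f, θ) → ∞` as `f → +∞`, while the
other summand is nonnegative. A continuous coercive function on `ℝ` attains its minimum.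
-/

/-- The DWD loss with parameter `C`. -/
noncomputable def dwdLoss (C u : ℝ) : ℝ :=
  if u ≤ 1 / Real.sqrt C then 2 * Real.sqrt C - C * u else 1 / u

/-- The FLAME loss with parameters `C` and `θ`. -/
noncomputable def flameLoss (C θ u : ℝ) : ℝ :=
  max (dwdLoss C u - θ * Real.sqrt C) 0

/-- The conditional risk `R(f) = p·L(f,θ) + (1−p)·L(−f,θ)`. -/
noncomputable def condRisk (C θ p f : ℝ) : ℝ :=
  p * flameLoss C θ f + (1 - p) * flameLoss C θ (-f)

open Filter Set Real

section DWD

variable {C : ℝ}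

lemma dwdLoss_of_le {u : ℝ} (h : u ≤ 1 / √C) : dwdLoss C u = 2 * √C - C * u := if_pos h

lemma dwdLoss_of_ge (hC : 0 < C) {u : ℝ} (h : 1 / √C ≤ u) : dwdLoss C u = 1 / u := by
  rcases h.lt_or_eq with h | rfl
  · exact if_neg (not_le.2 h)
  · have hs : √C ≠ 0 := (sqrt_pos.2 hC).ne'
    rw [dwdLoss_of_le le_rfl, one_div_one_div]
    field_simp
    rw [sq_sqrt hC.le]
    ring

lemma hasDerivAt_dwdLoss (hC : 0 < C) (u : ℝ) :
    HasDerivAt (dwdLoss C) (if u ≤ 1 / √C then -C else -1 / u ^ 2) u := by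
  have ha : 0 < 1 / √C := by positivity
  have hline (x : ℝ) : HasDerivAt (fun x => 2 * √C - C * x) (-C) x := by
    simpa using ((hasDerivAt_id x).const_mul C).const_sub (2 * √C)
  have hinv {x : ℝ} (hx : x ≠ 0) : HasDerivAt (fun x : ℝ => 1 / x) (-1 / x ^ 2) x := by
    simpa [one_div, neg_div] using hasDerivAt_inv hx
  rcases lt_trichotomy u (1 / √C) with h | rfl | h
  · rw [if_pos h.le]
    exact (hline u).congr_of_eventuallyEq <|
      (eventually_lt_nhds h).mono fun x hx => dwdLoss_of_le hx.le
  · rw [if_pos le_rfl]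
    have hleft : HasDerivWithinAt (dwdLoss C) (-C) (Iic (1 / √C)) (1 / √C) :=
      (hline _).hasDerivWithinAt.congr (fun x hx => dwdLoss_of_le hx) (dwdLoss_of_le le_rfl)
    have hslope : -1 / (1 / √C) ^ 2 = -C := by
      rw [div_pow, sq_sqrt hC.le]; field_simp
    have hright : HasDerivWithinAt (dwdLoss C) (-C) (Ici (1 / √C)) (1 / √C) :=
      (hslope ▸ hinv ha.ne').hasDerivWithinAt.congr (fun x hx => dwdLoss_of_ge hC hx)
        (dwdLoss_of_ge hC le_rfl)
    simpa using hleft.union hright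
  · rw [if_neg (not_le.2 h)]
    exact (hinv (ha.trans h).ne').congr_of_eventuallyEq <|
      (eventually_gt_nhds h).mono fun x hx => dwdLoss_of_ge hC hx.le

lemma differentiable_dwdLoss (hC : 0 < C) : Differentiable ℝ (dwdLoss C) :=
  fun u => (hasDerivAt_dwdLoss hC u).differentiableAt

lemma monotone_deriv_dwdLoss (hC : 0 < C) : Monotone (deriv (dwdLoss C)) := by
  have ha : 0 < 1 / √C := by positivity
  intro x y hxy
  simp only [(hasDerivAt_dwdLoss hC _).deriv]
  split_ifs with hx hy hy
  · exact le_rfl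
  · have hy0 : 0 < y := ha.trans (not_le.1 hy)
    have h1 : 1 < √C * y := (div_lt_iff₀' (sqrt_pos.2 hC)).1 (not_le.1 hy)
    rw [neg_div, neg_le_neg_iff, div_le_iff₀ (by positivity)]
    nlinarith [sq_sqrt hC.le]
  · exact absurd (hxy.trans hy) hx
  · have hx0 : 0 < x := ha.trans (not_le.1 hx)
    rw [neg_div, neg_div, neg_le_neg_iff]
    exact one_div_le_one_div_of_le (by positivity) (by gcongr)

lemma convexOn_dwdLoss (hC : 0 < C) : ConvexOn ℝ univ (dwdLoss C) :=
  (monotone_deriv_dwdLoss hC).convexOn_univ_of_deriv (differentiable_dwdLoss hC)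

lemma tendsto_dwdLoss_atBot (hC : 0 < C) : Tendsto (dwdLoss C) atBot atTop := by
  have hline : Tendsto (fun u => 2 * √C - C * u) atBot atTop := by
    simpa [sub_eq_add_neg] using
      tendsto_atTop_add_const_left _ (2 * √C) (tendsto_neg_atBot_atTop.const_mul_atTop hC)
  exact hline.congr' <| (eventually_le_atBot (1 / √C)).mono fun u hu => (dwdLoss_of_le hu).symm

end DWD

section FLAME

variable {C θ : ℝ}

lemma flameLoss_nonneg (u : ℝ) : 0 ≤ flameLoss C θ u := le_max_right _ _

lemma continuous_flameLoss (hC : 0 < C) : Continuous (flameLoss C θ) :=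
  ((differentiable_dwdLoss hC).continuous.sub continuous_const).max continuous_const

lemma convexOn_flameLoss (hC : 0 < C) : ConvexOn ℝ univ (flameLoss C θ) :=
  ((convexOn_dwdLoss hC).sub (concaveOn_const _ convex_univ)).sup (convexOn_const 0 convex_univ)

lemma tendsto_flameLoss_atBot (hC : 0 < C) : Tendsto (flameLoss C θ) atBot atTop :=
  tendsto_atTop_mono (fun _ => le_max_left _ _)
    (tendsto_atTop_add_const_right _ _ (tendsto_dwdLoss_atBot hC))

end FLAME

section Risk

variable {C θ p : ℝ}

lemma continuous_condRisk (hC : 0 < C) : Continuous (condRisk C θ p) :=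
  (continuous_const.mul (continuous_flameLoss hC)).add
    (continuous_const.mul ((continuous_flameLoss hC).comp continuous_neg))

lemma convexOn_condRisk (hC : 0 < C) (hp₀ : 0 ≤ p) (hp₁ : p ≤ 1) :
    ConvexOn ℝ univ (condRisk C θ p) := by
  have hneg : ConvexOn ℝ univ fun f => flameLoss C θ (-f) := by
    simpa [Function.comp_def] using
      (convexOn_flameLoss (θ := θ) hC).comp_linearMap (-LinearMap.id)
  exact ((convexOn_flameLoss hC).smul hp₀).add (hneg.smul (sub_nonneg.2 hp₁))

lemma tendsto_condRisk_atTop (hC : 0 < C) (hp₀ : 0 ≤ p) (hp₁ : p < 1) :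
    Tendsto (condRisk C θ p) atTop atTop :=
  Tendsto.nonneg_add_atTop (fun _ => mul_nonneg hp₀ (flameLoss_nonneg _))
    (((tendsto_flameLoss_atBot hC).comp tendsto_neg_atTop_atBot).const_mul_atTop (sub_pos.2 hp₁))

lemma tendsto_condRisk_atBot (hC : 0 < C) (hp₀ : 0 < p) (hp₁ : p ≤ 1) :
    Tendsto (condRisk C θ p) atBot atTop :=
  ((tendsto_flameLoss_atBot hC).const_mul_atTop hp₀).atTop_add_nonneg
    fun _ => mul_nonneg (sub_nonneg.2 hp₁) (flameLoss_nonneg _)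

end Risk

theorem condRisk_coercive_and_attains_min_general (C θ p : ℝ) (hC : 0 < C)
    (hp : p ∈ Set.Ioo (0 : ℝ) 1) :
    Continuous (condRisk C θ p) ∧
    ConvexOn ℝ Set.univ (condRisk C θ p) ∧
    Filter.Tendsto (condRisk C θ p) Filter.atTop Filter.atTop ∧
    Filter.Tendsto (condRisk C θ p) Filter.atBot Filter.atTop ∧
    ∃ fstar : ℝ, ∀ f : ℝ, condRisk C θ p fstar ≤ condRisk C θ p f := by
  obtain ⟨hp₀, hp₁⟩ := hp
  have hcont := continuous_condRisk (θ := θ) (p := p) hC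
  have htop := tendsto_condRisk_atTop (θ := θ) hC hp₀.le hp₁
  have hbot := tendsto_condRisk_atBot (θ := θ) hC hp₀ hp₁.le
  refine ⟨hcont, convexOn_condRisk hC hp₀.le hp₁.le, htop, hbot, hcont.exists_forall_le ?_⟩
  rw [cocompact_eq_atBot_atTop]
  exact hbot.sup htop

theorem condRisk_coercive_and_attains_min (C θ p : ℝ) (hC : 0 < C)
    (hθ : θ ∈ Set.Icc (0 : ℝ) 1) (hp : p ∈ Set.Ioo (0 : ℝ) 1) :
    Continuous (condRisk C θ p) ∧
    ConvexOn ℝ Set.univ (condRisk C θ p) ∧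
    Filter.Tendsto (condRisk C θ p) Filter.atTop Filter.atTop ∧
    Filter.Tendsto (condRisk C θ p) Filter.atBot Filter.atTop ∧
    ∃ fstar : ℝ, ∀ f : ℝ, condRisk C θ p fstar ≤ condRisk C θ p f :=
  condRisk_coercive_and_attains_min_general C θ p hC hp
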